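/- Let R be a right SAP ring and M a right R-module such that M·P = M for all prime two-sided ideals P of R. Then M = 0. -/
import Mathlib


open MulOpposite

/-- FP-injectivity (absolute purity). -/
def FPInjective (A : Type) [Ring A] (M : Type) [AddCommGroup M] [Module A M] : Prop :=
  ∀ (N : Type) [AddCommGroup N] [Module A N] (L : Submodule A N),
    Module.FinitePresentation A (N ⧸ L) →
      ∀ f : L →ₗ[A] M, ∃ g : N →ₗ[A] M, ∀ x : L, g x = f x

/-- The product of two-sided ideals. -/
def tsiMul {R : Type} [Ring R] (I J : TwoSidedIdeal R) : TwoSidedIdeal R :=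
  TwoSidedIdeal.span {z : R | ∃ a ∈ I, ∃ b ∈ J, z = a * b}

/-- A prime two-sided ideal. -/
def IsPrimeTSI {R : Type} [Ring R] (P : TwoSidedIdeal R) : Prop :=
  P ≠ ⊤ ∧ ∀ A B : TwoSidedIdeal R, tsiMul A B ≤ P → A ≤ P ∨ B ≤ P

/-- `M·P`: the submodule of the right module `M` generated by the products `m * p`, `p ∈ P`. -/
def smulTSI {R : Type} [Ring R] (M : Type) [AddCommGroup M] [Module Rᵐᵒᵖ M]
    (P : TwoSidedIdeal R) : Submodule Rᵐᵒᵖ M :=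
  Submodule.span Rᵐᵒᵖ {z : M | ∃ m : M, ∃ p ∈ P, z = op p • m}

section Ann

variable {R : Type} [Ring R]

/-- The annihilator of a right module as a two-sided ideal. -/
def annTSI (S : Type) [AddCommGroup S] [Module Rᵐᵒᵖ S] : TwoSidedIdeal R :=
  TwoSidedIdeal.mk' {r : R | ∀ s : S, op r • s = 0}
    (fun s => by simp)
    (fun {x y} hx hy s => by rw [op_add, add_smul, hx s, hy s, add_zero])
    (fun {x} hx s => by rw [op_neg, neg_smul, hx s, neg_zero])
    (fun {x y} hy s => by rw [op_mul, mul_smul, hy])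
    (fun {x y} hx s => by rw [op_mul, mul_smul, hx, smul_zero])

lemma mem_annTSI {S : Type} [AddCommGroup S] [Module Rᵐᵒᵖ S] {r : R} :
    r ∈ annTSI (R := R) S ↔ ∀ s : S, op r • s = 0 :=
  TwoSidedIdeal.mem_mk' _ _ _ _ _ _ r

lemma annTSI_prime (S : Type) [AddCommGroup S] [Module Rᵐᵒᵖ S]
    (hS : IsSimpleModule Rᵐᵒᵖ S) : IsPrimeTSI (annTSI (R := R) S) := by
  constructor
  · intro h
    haveI := hS
    haveI := IsSimpleModule.nontrivial Rᵐᵒᵖ S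
    obtain ⟨s, hs⟩ := exists_ne (0 : S)
    have h1 : (1 : R) ∈ annTSI (R := R) S := h ▸ TwoSidedIdeal.mem_top _
    have := mem_annTSI.mp h1 s
    rw [op_one, one_smul] at this
    exact hs this
  · intro A B hAB
    by_contra hc
    push_neg at hc
    obtain ⟨hA, hB⟩ := hc
    obtain ⟨a, haA, haP⟩ := SetLike.not_le_iff_exists.mp hA
    rw [mem_annTSI] at haP
    push_neg at haP
    obtain ⟨s₀, hs₀⟩ := haP
    -- S·A = ⊤
    have hT : smulTSI S A = ⊤ := by
      rcases hS.eq_bot_or_eq_top (smulTSI S A) with h | h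
      · exfalso
        apply hs₀
        have : op a • s₀ ∈ smulTSI S A :=
          Submodule.subset_span ⟨s₀, a, haA, rfl⟩
        rw [h] at this
        exact this
      · exact h
    have key : ∀ t : S, t ∈ smulTSI S A → ∀ b ∈ B, op b • t = 0 := by
      intro t ht
      induction ht using Submodule.span_induction with
      | mem z hz =>
          obtain ⟨s, a', ha', rfl⟩ := hz
          intro b hb
          rw [← mul_smul, ← op_mul]
          have hab : a' * b ∈ annTSI (R := R) S :=
            hAB (TwoSidedIdeal.subset_span ⟨a', ha', b, hb, rfl⟩)
          exact mem_annTSI.mp hab s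
      | zero => intro b hb; exact smul_zero _
      | add u v _ _ hu hv => intro b hb; rw [smul_add, hu b hb, hv b hb, add_zero]
      | smul c u _ hu =>
          intro b hb
          rw [← mul_smul]
          have hoc : op b * c = op ((unop c) * b) := by rw [op_mul, op_unop]
          rw [hoc]
          exact hu _ (B.mul_mem_left _ _ hb)
    apply hB
    intro b hb
    rw [mem_annTSI]
    intro t
    exact key t (hT ▸ Submodule.mem_top) b hb

end Ann

/-- Over a right SAP ring, a right module `M` with `M·P = M` for every prime two-sided
ideal `P` is zero. -/
theorem stmt14 (R : Type) [Ring R]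
    (hSAP : ∀ (S : Type) [AddCommGroup S] [Module Rᵐᵒᵖ S],
      IsSimpleModule Rᵐᵒᵖ S → FPInjective Rᵐᵒᵖ S)
    (M : Type) [AddCommGroup M] [Module Rᵐᵒᵖ M]
    (hM : ∀ P : TwoSidedIdeal R, IsPrimeTSI P → smulTSI M P = ⊤) :
    Subsingleton M := by
  by_contra hns
  rw [not_subsingleton_iff_nontrivial] at hns
  obtain ⟨m, hm0⟩ := exists_ne (0 : M)
  set C : Submodule Rᵐᵒᵖ M := Submodule.span Rᵐᵒᵖ {m} with hCdef
  have hmC : m ∈ C := Submodule.mem_span_singleton_self m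
  have hC0 : (⟨m, hmC⟩ : C) ≠ 0 := by
    intro h
    exact hm0 (congrArg Subtype.val h)
  haveI : Module.Finite Rᵐᵒᵖ C := Module.Finite.span_singleton Rᵐᵒᵖ m
  haveI : IsCoatomic (Submodule Rᵐᵒᵖ C) :=
    CompleteLattice.coatomic_of_top_compact
      ((Submodule.fg_iff_compact _).mp (Module.finite_def.mp inferInstance))
  have hbot : (⊥ : Submodule Rᵐᵒᵖ C) ≠ ⊤ := by
    intro h
    have : (⟨m, hmC⟩ : C) ∈ (⊥ : Submodule Rᵐᵒᵖ C) := h ▸ Submodule.mem_top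
    exact hC0 this
  obtain ⟨K, hK, -⟩ := (eq_top_or_exists_le_coatom (⊥ : Submodule Rᵐᵒᵖ C)).resolve_left hbot
  haveI hSsimple : IsSimpleModule Rᵐᵒᵖ (C ⧸ K) := isSimpleModule_iff_isCoatom.mpr hK
  set P : TwoSidedIdeal R := annTSI (R := R) (C ⧸ K) with hPdef
  have hmP : m ∈ smulTSI M P := (hM P (annTSI_prime _ hSsimple)) ▸ Submodule.mem_top
  rw [smulTSI, Submodule.mem_span_set'] at hmP
  obtain ⟨n, fc, ge, hsum⟩ := hmP
  choose mm pp hpp hz using fun i => (ge i).2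
  set x : Fin n → Rᵐᵒᵖ := fun i => op (pp i * unop (fc i)) with hxdef
  set φ : (Fin n → Rᵐᵒᵖ) →ₗ[Rᵐᵒᵖ] M :=
    { toFun := fun v => ∑ i, v i • mm i
      map_add' := fun v w => by
        simp only [Pi.add_apply, add_smul, Finset.sum_add_distrib]
      map_smul' := fun c v => by
        simp only [Pi.smul_apply, smul_eq_mul, mul_smul, RingHom.id_apply, Finset.smul_sum] }
    with hφdef
  have hφx : φ x = m := by
    rw [← hsum]
    show ∑ i, x i • mm i = _
    refine Finset.sum_congr rfl fun i _ => ?_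
    rw [hz i, ← mul_smul]
    show op (pp i * unop (fc i)) • mm i = (fc i * op (pp i)) • mm i
    rw [op_mul, op_unop]
  set L : Submodule Rᵐᵒᵖ (Fin n → Rᵐᵒᵖ) := Submodule.span Rᵐᵒᵖ {x} with hLdef
  have hφL : ∀ l ∈ L, φ l ∈ C := by
    intro l hl
    obtain ⟨c, rfl⟩ := Submodule.mem_span_singleton.mp hl
    rw [map_smul, hφx]
    exact C.smul_mem _ hmC
  have hfp : Module.FinitePresentation Rᵐᵒᵖ ((Fin n → Rᵐᵒᵖ) ⧸ L) := by
    apply Module.finitePresentation_of_surjective L.mkQ (Submodule.mkQ_surjective L)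
    rw [Submodule.ker_mkQ]
    exact Submodule.fg_span_singleton x
  obtain ⟨g, hg⟩ := hSAP (C ⧸ K) hSsimple (Fin n → Rᵐᵒᵖ) L hfp
    (K.mkQ.comp (φ.restrict hφL))
  have hxL : x ∈ L := Submodule.mem_span_singleton_self x
  have h1 : g x = K.mkQ ⟨m, hmC⟩ := by
    have := hg ⟨x, hxL⟩
    rw [this]
    show K.mkQ (φ.restrict hφL ⟨x, hxL⟩) = _
    congr 1
    exact Subtype.ext hφx
  have h3 : K.mkQ ⟨m, hmC⟩ ≠ 0 := by
    rw [Submodule.mkQ_apply, Ne, Submodule.Quotient.mk_eq_zero]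
    intro hmem
    apply hK.1
    rw [eq_top_iff]
    rintro ⟨z, hzC⟩ -
    obtain ⟨c, hc⟩ := Submodule.mem_span_singleton.mp hzC
    have : (⟨z, hzC⟩ : C) = c • (⟨m, hmC⟩ : C) := Subtype.ext hc.symm
    rw [this]
    exact K.smul_mem c hmem
  apply h3
  rw [← h1]
  rw [pi_eq_sum_univ x, map_sum]
  refine Finset.sum_eq_zero fun i _ => ?_
  rw [map_smul, hxdef]
  exact mem_annTSI.mp (P.mul_mem_right _ _ (hpp i)) _
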